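/- Let m ≥ 3 be an odd integer and let 1/2 < H < 1. Then there exists a real polynomial Q (namely Q(x) = x³) such that the Hermite rank m′ of the composition Q ∘ He_m satisfies (2H−2)m′ + 1 > 0; in fact m′ = 1 and (2H−2)·1 + 1 = 2H − 1 > 0. -/

import Mathlib

open Polynomial MeasureTheory ProbabilityTheory

/-- The `n`-th probabilists' Hermite polynomial, with real coefficients. -/
noncomputable def hermiteR (n : ℕ) : Polynomial ℝ :=
  (Polynomial.hermite n).map (Int.castRingHom ℝ)

/-- The standard Gaussian measure `N(0,1)` on `ℝ`. -/
noncomputable def stdGaussian : Measure ℝ := gaussianReal 0 1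

/-- `F` has Hermite rank `m`: `m ≥ 1` is the smallest integer `k ≥ 1` such that
`∫ F(x) He_k(x) dγ(x) ≠ 0`, where `γ` is the standard Gaussian measure. -/
def HasHermiteRank (F : Polynomial ℝ) (m : ℕ) : Prop :=
  1 ≤ m ∧ (∫ x, F.eval x * (hermiteR m).eval x ∂stdGaussian) ≠ 0 ∧
    ∀ k, 1 ≤ k → k < m → (∫ x, F.eval x * (hermiteR k).eval x ∂stdGaussian) = 0

/-!
Integrating by parts against the Gaussian density gives `∫ He_n f dγ = ∫ f⁽ⁿ⁾ dγ` for every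
polynomial `f`. Hence `∫ He_1 He_m³ dγ = 3m ∫ He_{m-1} He_m² dγ`. By the Leibniz rule and
`He_a' = a He_{a-1}`, the triple integrals `∫ He_j He_a He_b dγ` obey a recursion in `j` with
nonnegative coefficients, starting from orthogonality; by induction they are positive whenever
`j, a, b` satisfy the triangle inequalities and `j + a + b` is even, as `m - 1, m, m` do for odd `m`.
-/

open Real

theorem Polynomial.iterate_derivative_eq_C_of_natDegree_le {R : Type*} [Semiring R]
    {p : R[X]} {n : ℕ} (hp : p.natDegree ≤ n) :
    derivative^[n] p = C (n.factorial • p.coeff n) := by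
  have hdeg : (derivative^[n] p).natDegree = 0 := by
    have := natDegree_iterate_derivative p n
    omega
  rw [eq_C_of_natDegree_eq_zero hdeg, coeff_iterate_derivative, zero_add, Nat.descFactorial_self]

lemma integrable_eval_mul_exp_neg_sq_div_two (p : ℝ[X]) :
    Integrable (fun x : ℝ => p.eval x * exp (-(x ^ 2 / 2))) := by
  induction p using Polynomial.induction_on' with
  | add p q hp hq =>
    simp only [eval_add, add_mul]
    exact hp.add hq
  | monomial n a =>
    have h := integrable_rpow_mul_exp_neg_mul_sq (b := 1 / 2) one_half_pos
      (s := n) (by linarith [n.cast_nonneg (α := ℝ)])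
    simp only [rpow_natCast] at h
    convert h.const_mul a using 2 with x
    rw [eval_monomial]
    ring_nf

lemma gaussianPDFReal_zero_one (x : ℝ) :
    gaussianPDFReal 0 1 x = (√(2 * π))⁻¹ * exp (-(x ^ 2 / 2)) := by
  simp [gaussianPDFReal, neg_div]

lemma integral_stdGaussian (f : ℝ → ℝ) :
    ∫ x, f x ∂stdGaussian = (√(2 * π))⁻¹ * ∫ x, f x * exp (-(x ^ 2 / 2)) := by
  show ∫ x, f x ∂gaussianReal 0 1 = _
  rw [integral_gaussianReal_eq_integral_smul one_ne_zero, ← integral_const_mul]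
  simp_rw [gaussianPDFReal_zero_one, smul_eq_mul]
  congr with x
  ring

lemma integrable_eval_stdGaussian (p : ℝ[X]) : Integrable (fun x => p.eval x) stdGaussian := by
  induction p using Polynomial.induction_on' with
  | add p q hp hq =>
    simp only [eval_add]
    exact hp.add hq
  | monomial n a =>
    have h := ((memLp_id_gaussianReal (μ := 0) (v := 1) n).integrable_norm_pow').const_mul |a|
    refine h.mono' (by fun_prop) (ae_of_all _ fun x => ?_)
    simp [eval_monomial, norm_pow]

noncomputable def stdGaussianIntegral : ℝ[X] →ₗ[ℝ] ℝ where
  toFun p := ∫ x, p.eval x ∂stdGaussian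
  map_add' p q := by
    simp only [eval_add]
    exact integral_add (integrable_eval_stdGaussian p) (integrable_eval_stdGaussian q)
  map_smul' c p := by simp [integral_const_mul]

local notation "𝔼γ" => stdGaussianIntegral

lemma stdGaussianIntegral_apply (p : ℝ[X]) : 𝔼γ p = ∫ x, p.eval x ∂stdGaussian := rfl

lemma stdGaussianIntegral_C (c : ℝ) : 𝔼γ (C c) = c := by
  have : IsProbabilityMeasure stdGaussian := by unfold _root_.stdGaussian; infer_instance
  simp [stdGaussianIntegral_apply]

lemma hasDerivAt_exp_neg_sq_div_two (x : ℝ) :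
    HasDerivAt (fun y => exp (-(y ^ 2 / 2))) (-x * exp (-(x ^ 2 / 2))) x :=
  ((hasDerivAt_pow 2 x).div_const 2).neg.exp.congr_deriv (by simp; ring)

lemma stdGaussianIntegral_X_mul (p : ℝ[X]) : 𝔼γ (X * p) = 𝔼γ (derivative p) := by
  simp only [stdGaussianIntegral_apply, integral_stdGaussian]
  congr 1
  have huv' : Integrable (fun x => p.eval x * (-x * exp (-(x ^ 2 / 2)))) := by
    refine (integrable_eval_mul_exp_neg_sq_div_two (X * p)).neg.congr (ae_of_all _ fun x => ?_)
    simp only [Pi.neg_apply, eval_mul, eval_X]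
    ring
  have hparts := integral_mul_deriv_eq_deriv_mul_of_integrable
    (fun x _ => p.hasDerivAt x) (fun x _ => hasDerivAt_exp_neg_sq_div_two x) huv'
    (integrable_eval_mul_exp_neg_sq_div_two _) (integrable_eval_mul_exp_neg_sq_div_two p)
  calc ∫ x, (X * p).eval x * exp (-(x ^ 2 / 2))
      = -∫ x, p.eval x * (-x * exp (-(x ^ 2 / 2))) := by
        rw [← integral_neg]
        congr with x
        simp only [eval_mul, eval_X]
        ring
    _ = ∫ x, (derivative p).eval x * exp (-(x ^ 2 / 2)) := by rw [hparts, neg_neg]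

lemma hermiteR_zero : hermiteR 0 = 1 := by simp [hermiteR]

lemma hermiteR_succ (n : ℕ) :
    hermiteR (n + 1) = X * hermiteR n - derivative (hermiteR n) := by
  simp [hermiteR, hermite_succ, derivative_map]

lemma natDegree_hermiteR (n : ℕ) : (hermiteR n).natDegree = n := by
  rw [hermiteR, natDegree_map_eq_of_injective (RingHom.injective_int _), natDegree_hermite]

lemma coeff_hermiteR_self (n : ℕ) : (hermiteR n).coeff n = 1 := by
  simp [hermiteR, coeff_hermite_self]

lemma derivative_hermiteR_succ (n : ℕ) :
    derivative (hermiteR (n + 1)) = (n + 1 : ℝ) • hermiteR n := by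
  induction n with
  | zero => simp [hermiteR_succ, hermiteR_zero]
  | succ n ih =>
    rw [hermiteR_succ (n + 1), derivative_sub, derivative_mul, derivative_X, one_mul, ih,
      derivative_smul, mul_smul_comm, add_sub_assoc, ← smul_sub, ← hermiteR_succ]
    push_cast
    module

lemma derivative_hermiteR (n : ℕ) : derivative (hermiteR n) = (n : ℝ) • hermiteR (n - 1) := by
  cases n with
  | zero => simp [hermiteR_zero]
  | succ n => simpa using derivative_hermiteR_succ n

lemma stdGaussianIntegral_hermiteR_succ_mul (n : ℕ) (f : ℝ[X]) :
    𝔼γ (hermiteR (n + 1) * f) = 𝔼γ (hermiteR n * derivative f) := by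
  rw [hermiteR_succ, sub_mul, map_sub, mul_assoc, stdGaussianIntegral_X_mul, derivative_mul,
    map_add, add_sub_cancel_left]

lemma stdGaussianIntegral_hermiteR_mul (n : ℕ) (f : ℝ[X]) :
    𝔼γ (hermiteR n * f) = 𝔼γ (derivative^[n] f) := by
  induction n generalizing f with
  | zero => simp [hermiteR_zero]
  | succ n ih => rw [stdGaussianIntegral_hermiteR_succ_mul, ih, Function.iterate_succ_apply]

lemma stdGaussianIntegral_hermiteR_mul_hermiteR (a b : ℕ) :
    𝔼γ (hermiteR a * hermiteR b) = if a = b then (a.factorial : ℝ) else 0 := by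
  rcases lt_trichotomy a b with h | rfl | h
  · rw [mul_comm, stdGaussianIntegral_hermiteR_mul,
      iterate_derivative_eq_zero (by rwa [natDegree_hermiteR]), map_zero, if_neg h.ne]
  · rw [stdGaussianIntegral_hermiteR_mul,
      iterate_derivative_eq_C_of_natDegree_le (natDegree_hermiteR a).le, coeff_hermiteR_self,
      stdGaussianIntegral_C, if_pos rfl, nsmul_one]
  · rw [stdGaussianIntegral_hermiteR_mul,
      iterate_derivative_eq_zero (by rwa [natDegree_hermiteR]), map_zero, if_neg h.ne']

lemma stdGaussianIntegral_hermiteR_succ_mul_mul (j a b : ℕ) :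
    𝔼γ (hermiteR (j + 1) * (hermiteR a * hermiteR b)) =
      a * 𝔼γ (hermiteR j * (hermiteR (a - 1) * hermiteR b)) +
        b * 𝔼γ (hermiteR j * (hermiteR a * hermiteR (b - 1))) := by
  rw [stdGaussianIntegral_hermiteR_succ_mul, derivative_mul, derivative_hermiteR,
    derivative_hermiteR, smul_mul_assoc, mul_smul_comm, mul_add, mul_smul_comm, mul_smul_comm,
    map_add, map_smul, map_smul, smul_eq_mul, smul_eq_mul]

lemma stdGaussianIntegral_hermiteR_mul_mul_nonneg (j a b : ℕ) :
    0 ≤ 𝔼γ (hermiteR j * (hermiteR a * hermiteR b)) := by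
  induction j generalizing a b with
  | zero =>
    rw [hermiteR_zero, one_mul, stdGaussianIntegral_hermiteR_mul_hermiteR]
    split_ifs <;> positivity
  | succ j ih =>
    rw [stdGaussianIntegral_hermiteR_succ_mul_mul]
    have := ih (a - 1) b
    have := ih a (b - 1)
    positivity

lemma stdGaussianIntegral_hermiteR_mul_mul_pos {j a b : ℕ} (hab : a ≤ b + j) (hba : b ≤ a + j)
    (hj : j ≤ a + b) (hpar : Even (a + b + j)) :
    0 < 𝔼γ (hermiteR j * (hermiteR a * hermiteR b)) := by
  induction j generalizing a b with
  | zero =>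
    obtain rfl : a = b := by omega
    rw [hermiteR_zero, one_mul, stdGaussianIntegral_hermiteR_mul_hermiteR, if_pos rfl]
    positivity
  | succ j ih =>
    wlog hle : a ≤ b generalizing a b
    · rw [mul_comm (hermiteR a)]
      exact this hba hab (by omega) (by rwa [add_comm b]) (by omega)
    -- the `b - 1` branch of the recursion stays in the triangle, the `a - 1` branch is `≥ 0`
    rw [Nat.even_iff] at hpar
    have hb : (0 : ℝ) < b := by exact_mod_cast (by omega : 0 < b)
    have hlower := ih (a := a) (b := b - 1) (by omega) (by omega) (by omega)
      (Nat.even_iff.2 (by omega))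
    have := stdGaussianIntegral_hermiteR_mul_mul_nonneg j (a - 1) b
    rw [stdGaussianIntegral_hermiteR_succ_mul_mul]
    positivity

theorem hasHermiteRank_X_pow_three_comp_hermiteR {m : ℕ} (hm : Odd m) :
    HasHermiteRank ((X ^ 3 : ℝ[X]).comp (hermiteR m)) 1 := by
  refine ⟨le_rfl, ?_, fun k hk hk' => absurd hk' (by omega)⟩
  have hderiv : derivative ((X ^ 3 : ℝ[X]).comp (hermiteR m)) =
      (3 * m : ℝ) • (hermiteR (m - 1) * (hermiteR m * hermiteR m)) := by
    rw [X_pow_comp, derivative_pow, derivative_hermiteR]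
    simp only [smul_eq_C_mul]
    push_cast
    simp only [C_mul]
    ring
  have hint : ∫ x, ((X ^ 3 : ℝ[X]).comp (hermiteR m)).eval x * (hermiteR 1).eval x ∂stdGaussian =
      𝔼γ (hermiteR 1 * (X ^ 3 : ℝ[X]).comp (hermiteR m)) := by
    simp only [stdGaussianIntegral_apply, eval_mul, mul_comm]
  obtain ⟨t, rfl⟩ := hm
  have hpos := stdGaussianIntegral_hermiteR_mul_mul_pos (j := 2 * t) (a := 2 * t + 1)
    (b := 2 * t + 1) (by omega) (by omega) (by omega) ⟨3 * t + 1, by omega⟩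
  rw [hint, stdGaussianIntegral_hermiteR_mul, Function.iterate_one, hderiv, map_smul,
    smul_eq_mul, Nat.add_sub_cancel]
  positivity

theorem exists_Q_odd_case_general (m : ℕ) (hmo : Odd m)
    (H : ℝ) (hH1 : 1 / 2 < H) :
    ∃ (Q : Polynomial ℝ) (m' : ℕ), Q = Polynomial.X ^ 3 ∧ m' = 1 ∧
      HasHermiteRank (Q.comp (hermiteR m)) m' ∧
      (2 * H - 2) * (m' : ℝ) + 1 > 0 ∧ (2 * H - 2) * 1 + 1 = 2 * H - 1 ∧ 2 * H - 1 > 0 :=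
  ⟨X ^ 3, 1, rfl, rfl, hasHermiteRank_X_pow_three_comp_hermiteR hmo,
    by norm_num; linarith, by ring, by linarith⟩

/-- For every odd `m ≥ 3` and every `1/2 < H < 1`, there exists a polynomial `Q`
(namely `Q(x) = x³`) such that the Hermite rank `m'` of `Q ∘ He_m` satisfies
`(2H-2) m' + 1 > 0`; in fact `m' = 1` and `(2H-2)·1 + 1 = 2H - 1 > 0`. -/
theorem exists_Q_odd_case (m : ℕ) (hm : 3 ≤ m) (hmo : Odd m)
    (H : ℝ) (hH1 : 1 / 2 < H) (hH2 : H < 1) :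
    ∃ (Q : Polynomial ℝ) (m' : ℕ), Q = Polynomial.X ^ 3 ∧ m' = 1 ∧
      HasHermiteRank (Q.comp (hermiteR m)) m' ∧
      (2 * H - 2) * (m' : ℝ) + 1 > 0 ∧ (2 * H - 2) * 1 + 1 = 2 * H - 1 ∧ 2 * H - 1 > 0 :=
  exists_Q_odd_case_general m hmo H hH1
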